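/- Let L be slowly varying and increasing to ∞ with φ(y) = ∫_1^y L(u)/u du and ψ = φ^{-1}. For c > 0 and n_k = ψ(ck), define d_n = log L(n) + log log n. Then d_{n_k}/log k → 1 as k → ∞. -/

import Mathlib

/-!
Since `φ (ψ x) = x`, both limits are statements about `φ` at infinity. Monotonicity of `L` gives
`L a * log (b / a) ≤ φ b - φ a ≤ L b * log (b / a)`. Applied between `ψ (c k)` and `ψ (c (k + 1))`,
where `φ` grows by exactly `c`, it bounds the logarithm of their ratio by `c / L (ψ (c k)) → 0`;
applied on `[1, y]` it gives `log φ y ≤ log L y + log log y`.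

For the reverse inequality: the derivative of `t ↦ log L (eᵗ)` is `x L'(x) / L(x)` at `x = eᵗ`,
so this function is eventually concave. Comparing secant slopes from a fixed base point `t₀` gives
`log L y - C ≤ a * (log L (y ^ θ) - C)`, `C = log L (e^t₀)`, for large `y` whenever `a θ > 1`, while
`φ y ≥ L (y ^ θ) * (1 - θ) * log y`. Hence `log L y + log log y ≤ a * log φ y + O(1)` for every
`a > 1`, and at `y = ψ (c k)` the denominator `log φ y = log (c k)` is asymptotic to `log k`.
-/

open Filter Real Set

def SlowlyVarying (L : ℝ → ℝ) : Prop :=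
  ∀ c > (0:ℝ), Tendsto (fun x => L (c * x) / L x) atTop (nhds 1)

open Topology

section IntegralBounds

variable {L : ℝ → ℝ} {a b : ℝ}

lemma MonotoneOn.intervalIntegrable_div_id (hL : MonotoneOn L (Icc a b)) (ha : 0 < a)
    (hab : a ≤ b) : IntervalIntegrable (fun u => L u / u) MeasureTheory.volume a b := by
  rw [← uIcc_of_le hab] at hL
  refine hL.intervalIntegrable.mul_continuousOn (continuousOn_inv₀.mono fun u hu => ?_)
  rw [uIcc_of_le hab] at hu
  exact (ha.trans_le hu.1).ne'

lemma integral_const_div_id (ha : 0 < a) (hab : a ≤ b) (C : ℝ) :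
    ∫ u in a..b, C / u = C * (log b - log a) := by
  simp only [div_eq_mul_inv, intervalIntegral.integral_const_mul,
    integral_inv_of_pos ha (ha.trans_le hab), ← log_div (ha.trans_le hab).ne' ha.ne']

lemma MonotoneOn.mul_log_sub_le_integral_div_id (hL : MonotoneOn L (Icc a b)) (ha : 0 < a)
    (hab : a ≤ b) : L a * (log b - log a) ≤ ∫ u in a..b, L u / u := by
  rw [← integral_const_div_id ha hab]
  exact intervalIntegral.integral_mono_on hab
    (monotoneOn_const.intervalIntegrable_div_id ha hab) (hL.intervalIntegrable_div_id ha hab)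
    fun u hu => div_le_div_of_nonneg_right (hL ⟨le_rfl, hab⟩ hu hu.1) (ha.trans_le hu.1).le

lemma MonotoneOn.integral_div_id_le_mul_log_sub (hL : MonotoneOn L (Icc a b)) (ha : 0 < a)
    (hab : a ≤ b) : ∫ u in a..b, L u / u ≤ L b * (log b - log a) := by
  rw [← integral_const_div_id ha hab]
  exact intervalIntegral.integral_mono_on hab
    (hL.intervalIntegrable_div_id ha hab) (monotoneOn_const.intervalIntegrable_div_id ha hab)
    fun u hu => div_le_div_of_nonneg_right (hL hu ⟨hab, le_rfl⟩ hu.2) (ha.trans_le hu.1).le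

end IntegralBounds

lemma ConcaveOn.sub_le_div_mul_sub {g : ℝ → ℝ} {t₀ u t : ℝ} (hg : ConcaveOn ℝ (Ici t₀) g)
    (hu : t₀ < u) (hut : u ≤ t) : g t - g t₀ ≤ (t - t₀) / (u - t₀) * (g u - g t₀) := by
  have h := hg.neg.secant_mono (a := t₀) self_mem_Ici hu.le (hu.le.trans hut) hu.ne'
    (hu.trans_le hut).ne' hut
  simp only [Pi.neg_apply, neg_sub_neg, div_le_div_iff₀ (sub_pos.2 hu)
    (sub_pos.2 (hu.trans_le hut))] at h
  rw [div_mul_eq_mul_div, le_div_iff₀ (sub_pos.2 hu)]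
  linarith

lemma ConcaveOn.eventually_sub_le_mul_sub {g : ℝ → ℝ} {t₀ a θ : ℝ}
    (hg : ConcaveOn ℝ (Ici t₀) g) (hmono : MonotoneOn g (Ici t₀)) (hθ : 0 < θ) (hθ1 : θ ≤ 1)
    (haθ : 1 < a * θ) : ∀ᶠ t in atTop, g t - g t₀ ≤ a * (g (θ * t) - g t₀) := by
  filter_upwards [eventually_ge_atTop 0,
    (tendsto_id.const_mul_atTop hθ).eventually_gt_atTop t₀,
    (tendsto_id.const_mul_atTop (sub_pos.2 haθ)).eventually_ge_atTop ((a - 1) * t₀)]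
    with t ht hθt hat
  simp only [id] at hθt hat
  have hsecant := hg.sub_le_div_mul_sub (t := t) hθt (by nlinarith)
  have hslope : (t - t₀) / (θ * t - t₀) ≤ a := by
    rw [div_le_iff₀ (sub_pos.2 hθt)]
    linarith
  have hincr : 0 ≤ g (θ * t) - g t₀ := sub_nonneg.2 (hmono self_mem_Ici hθt.le hθt.le)
  exact hsecant.trans (mul_le_mul_of_nonneg_right hslope hincr)

lemma concaveOn_log_comp_exp {L : ℝ → ℝ} {x₀ : ℝ} (hx₀ : 1 ≤ x₀)
    (hdiff : DifferentiableOn ℝ L (Ici 1)) (hpos : ∀ x, x₀ ≤ x → 0 < L x)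
    (hdec : AntitoneOn (fun x => x * deriv L x / L x) (Ici x₀)) :
    ConcaveOn ℝ (Ici (log x₀)) (fun t => log (L (exp t))) := by
  have hx₀pos : 0 < x₀ := one_pos.trans_le hx₀
  have hexp : ∀ t, log x₀ ≤ t → x₀ ≤ exp t := fun t => (log_le_iff_le_exp hx₀pos).1
  have hderiv : ∀ t, log x₀ < t →
      HasDerivAt (fun t => log (L (exp t))) (exp t * deriv L (exp t) / L (exp t)) t := by
    intro t ht
    have h1 : 1 < exp t := hx₀.trans_lt ((log_lt_iff_lt_exp hx₀pos).1 ht)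
    have hL := (hdiff.differentiableAt (Ici_mem_nhds h1)).hasDerivAt.comp t (hasDerivAt_exp t)
    have hlog := hL.log (hpos _ (hexp t ht.le)).ne'
    simp only [Function.comp_apply] at hlog
    convert hlog using 1
    ring
  refine AntitoneOn.concaveOn_of_deriv (convex_Ici _) ?_ ?_ ?_
  · refine ContinuousOn.log ?_ fun t ht => (hpos _ (hexp t ht)).ne'
    exact hdiff.continuousOn.comp continuous_exp.continuousOn
      fun t ht => hx₀.trans (hexp t ht)
  · rw [interior_Ici]
    exact fun t ht => (hderiv t ht).differentiableAt.differentiableWithinAt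
  · rw [interior_Ici]
    intro s hs t ht hst
    rw [(hderiv s hs).deriv, (hderiv t ht).deriv]
    exact hdec (hexp s hs.le) (hexp t ht.le) (exp_le_exp.2 hst)

lemma tendsto_div_nhds_one_of_le_of_le_mul_add {α : Type*} {l : Filter α} {f d : α → ℝ}
    (hf : Tendsto f l atTop) (hlow : ∀ᶠ x in l, f x ≤ d x)
    (hup : ∀ a > 1, ∃ K, ∀ᶠ x in l, d x ≤ a * f x + K) :
    Tendsto (fun x => d x / f x) l (𝓝 1) := by
  refine tendsto_order.2 ⟨fun b hb => ?_, fun b hb => ?_⟩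
  · filter_upwards [hlow, hf.eventually_gt_atTop 0] with x hlow hpos
    rw [lt_div_iff₀ hpos]
    nlinarith
  · obtain ⟨K, hK⟩ := hup ((1 + b) / 2) (by linarith)
    have hKf : Tendsto (fun x => K / f x) l (𝓝 0) := tendsto_const_nhds.div_atTop hf
    filter_upwards [hK, hf.eventually_gt_atTop 0,
      hKf.eventually (gt_mem_nhds (a := (b - 1) / 2) (by linarith))] with x hK hpos hKf
    rw [div_lt_iff₀ hpos] at hKf ⊢
    nlinarith

section IntegralOfLOverU

variable {L φ : ℝ → ℝ}

lemma sub_eq_integral_div_id (hmono : MonotoneOn L (Ici 1))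
    (hφ : ∀ t, φ t = ∫ u in (1:ℝ)..t, L u / u) {a b : ℝ} (ha : 1 ≤ a) (hab : a ≤ b) :
    φ b - φ a = ∫ u in a..b, L u / u := by
  rw [hφ, hφ]
  exact intervalIntegral.integral_interval_sub_left
    ((hmono.mono fun _ hu => hu.1).intervalIntegrable_div_id one_pos (ha.trans hab))
    ((hmono.mono fun _ hu => hu.1).intervalIntegrable_div_id one_pos ha)

lemma continuousOn_Icc_of_integral_div_id (hmono : MonotoneOn L (Ici 1))
    (hφ : ∀ t, φ t = ∫ u in (1:ℝ)..t, L u / u) {y : ℝ} (hy : 1 ≤ y) :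
    ContinuousOn φ (Icc 1 y) := by
  have h := intervalIntegral.continuousOn_primitive_interval'
    ((hmono.mono Icc_subset_Ici_self).intervalIntegrable_div_id one_pos hy) left_mem_uIcc
  rw [uIcc_of_le hy] at h
  exact h.congr fun t _ => hφ t

lemma eventually_log_le_log_add_log_log (hmono : MonotoneOn L (Ici 1))
    (hφ : ∀ t, φ t = ∫ u in (1:ℝ)..t, L u / u) (hφtop : Tendsto φ atTop atTop) :
    ∀ᶠ y in atTop, log (φ y) ≤ log (L y) + log (log y) := by
  filter_upwards [eventually_gt_atTop 1, hφtop.eventually_gt_atTop 0] with y hy hφy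
  have hlogy : 0 < log y := log_pos hy
  have hbound : φ y ≤ L y * log y := by
    simpa [hφ] using
      (hmono.mono Icc_subset_Ici_self).integral_div_id_le_mul_log_sub one_pos hy.le
  have hLy : 0 < L y := pos_of_mul_pos_left (hφy.trans_le hbound) hlogy.le
  rw [← log_mul hLy.ne' hlogy.ne']
  exact log_le_log hφy hbound

lemma mul_log_le_of_rpow (hmono : MonotoneOn L (Ici 1))
    (hφ : ∀ t, φ t = ∫ u in (1:ℝ)..t, L u / u) {y θ : ℝ} (hy : 1 ≤ y) (hθ1 : θ ≤ 1)
    (hz1 : 1 ≤ y ^ θ) (hφz : 0 ≤ φ (y ^ θ)) : L (y ^ θ) * ((1 - θ) * log y) ≤ φ y := by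
  have hzy : y ^ θ ≤ y := rpow_le_self_of_one_le hy hθ1
  calc L (y ^ θ) * ((1 - θ) * log y) = L (y ^ θ) * (log y - log (y ^ θ)) := by
        rw [log_rpow (by linarith)]; ring
    _ ≤ ∫ u in y ^ θ..y, L u / u :=
        (hmono.mono fun u hu => hz1.trans hu.1).mul_log_sub_le_integral_div_id
          (one_pos.trans_le hz1) hzy
    _ = φ y - φ (y ^ θ) := (sub_eq_integral_div_id hmono hφ hz1 hzy).symm
    _ ≤ φ y := by linarith

lemma eventually_log_sub_le_mul_log_rpow_sub (hdiff : DifferentiableOn ℝ L (Ici 1))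
    (hmono : MonotoneOn L (Ici 1)) {x₀ x₁ : ℝ}
    (hdec : AntitoneOn (fun x => x * deriv L x / L x) (Ici x₀)) (hx₀₁ : x₀ ≤ x₁)
    (hx₁ : 1 ≤ x₁) (hLx₁ : 1 ≤ L x₁) {a θ : ℝ} (hθ0 : 0 < θ) (hθ1 : θ ≤ 1) (haθ : 1 < a * θ) :
    ∀ᶠ y in atTop, log (L y) - log (L x₁) ≤ a * (log (L (y ^ θ)) - log (L x₁)) := by
  have hL1 : ∀ x, x₁ ≤ x → 1 ≤ L x := fun x hx => hLx₁.trans (hmono hx₁ (hx₁.trans hx) hx)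
  have hexp : ∀ t, log x₁ ≤ t → x₁ ≤ exp t := fun t => (log_le_iff_le_exp (by linarith)).1
  have hconcave : ConcaveOn ℝ (Ici (log x₁)) (fun t => log (L (exp t))) :=
    concaveOn_log_comp_exp hx₁ hdiff (fun x hx => one_pos.trans_le (hL1 x hx))
      (hdec.mono (Ici_subset_Ici.2 hx₀₁))
  have hmono' : MonotoneOn (fun t => log (L (exp t))) (Ici (log x₁)) := fun s hs t ht hst =>
    log_le_log (one_pos.trans_le (hL1 _ (hexp s hs)))
      (hmono (hx₁.trans (hexp s hs)) (hx₁.trans (hexp t ht)) (exp_le_exp.2 hst))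
  filter_upwards [tendsto_log_atTop.eventually
      (hconcave.eventually_sub_le_mul_sub hmono' hθ0 hθ1 haθ), eventually_gt_atTop 0]
    with y hconc hy
  rwa [exp_log hy, exp_log (by linarith), ← log_rpow hy, exp_log (rpow_pos_of_pos hy θ)]
    at hconc

lemma exists_eventually_log_add_log_log_le (hdiff : DifferentiableOn ℝ L (Ici 1))
    (hmono : MonotoneOn L (Ici 1)) (htop : Tendsto L atTop atTop)
    (hdec : ∃ x₀ : ℝ, AntitoneOn (fun x => x * deriv L x / L x) (Ici x₀))
    (hφ : ∀ t, φ t = ∫ u in (1:ℝ)..t, L u / u) (hφtop : Tendsto φ atTop atTop)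
    {a : ℝ} (ha : 1 < a) :
    ∃ K, ∀ᶠ y in atTop, log (L y) + log (log y) ≤ a * log (φ y) + K := by
  obtain ⟨x₀, hdec⟩ := hdec
  obtain ⟨x₁, hLx₁, hx₁⟩ :=
    ((htop.eventually_ge_atTop 1).and (eventually_ge_atTop (max x₀ 1))).exists
  have hx₁1 : 1 ≤ x₁ := (le_max_right _ _).trans hx₁
  set θ := (1 + a⁻¹) / 2 with hθ
  have ha' : a⁻¹ < 1 := inv_lt_one_of_one_lt₀ ha
  have hθ0 : 0 < θ := by positivity
  have hθ1 : θ < 1 := by linarith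
  have haθ : 1 < a * θ := by
    rw [hθ, mul_div_assoc', mul_add, mul_inv_cancel₀ (by positivity), lt_div_iff₀ two_pos]
    linarith
  refine ⟨-a * log (1 - θ), ?_⟩
  filter_upwards [eventually_log_sub_le_mul_log_rpow_sub hdiff hmono hdec
      ((le_max_left _ _).trans hx₁) hx₁1 hLx₁ hθ0 hθ1.le haθ,
    tendsto_log_atTop.eventually_ge_atTop 1,
    (tendsto_rpow_atTop hθ0).eventually ((hφtop.eventually_ge_atTop 0).and
      ((htop.eventually_ge_atTop 1).and (eventually_ge_atTop 1))), eventually_ge_atTop 1]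
    with y hconc hlogy ⟨hφz, hLz, hz1⟩ hy
  have hφy := mul_log_le_of_rpow hmono hφ hy hθ1.le hz1 hφz
  have hlogφ : log (L (y ^ θ)) + log (1 - θ) + log (log y) ≤ log (φ y) := by
    have h1θ : 0 < 1 - θ := sub_pos.2 hθ1
    rw [← log_mul (by positivity) (by linarith), ← log_mul (by positivity) (by linarith)]
    exact log_le_log (by positivity) (by linarith)
  have hC : 0 ≤ log (L x₁) := log_nonneg hLx₁
  have hloglog : 0 ≤ log (log y) := log_nonneg hlogy
  nlinarith [mul_nonneg (sub_nonneg.2 ha.le) hC, mul_nonneg (sub_nonneg.2 ha.le) hloglog,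
    mul_le_mul_of_nonneg_left hlogφ (by linarith : 0 ≤ a)]

lemma tendsto_log_add_log_log_div_log (hdiff : DifferentiableOn ℝ L (Ici 1))
    (hmono : MonotoneOn L (Ici 1)) (htop : Tendsto L atTop atTop)
    (hdec : ∃ x₀ : ℝ, AntitoneOn (fun x => x * deriv L x / L x) (Ici x₀))
    (hφ : ∀ t, φ t = ∫ u in (1:ℝ)..t, L u / u) (hφtop : Tendsto φ atTop atTop) :
    Tendsto (fun y => (log (L y) + log (log y)) / log (φ y)) atTop (𝓝 1) :=
  tendsto_div_nhds_one_of_le_of_le_mul_add (tendsto_log_atTop.comp hφtop)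
    (eventually_log_le_log_add_log_log hmono hφ hφtop)
    fun _ ha => exists_eventually_log_add_log_log_le hdiff hmono htop hdec hφ hφtop ha

end IntegralOfLOverU

section RightInverse

variable {φ ψ : ℝ → ℝ}

lemma one_le_of_rightInverse (hcont : ∀ y, 1 ≤ y → ContinuousOn φ (Icc 1 y)) (hφ1 : φ 1 = 0)
    (hφtop : Tendsto φ atTop atTop) (hψ : ∀ y ∈ Ici (1:ℝ), ψ (φ y) = y) {x : ℝ} (hx : 0 ≤ x) :
    1 ≤ ψ x := by
  obtain ⟨y, hxy, hy⟩ := ((hφtop.eventually_ge_atTop x).and (eventually_ge_atTop 1)).exists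
  obtain ⟨w, hw, rfl⟩ := intermediate_value_Icc hy (hcont y hy) ⟨hφ1 ▸ hx, hxy⟩
  rw [hψ w hw.1]
  exact hw.1

lemma monotoneOn_rightInverse (hφmono : StrictMonoOn φ (Ici 1)) (hψ1 : ∀ x, 0 ≤ x → 1 ≤ ψ x)
    (hψ' : ∀ x ∈ Ici (0:ℝ), φ (ψ x) = x) : MonotoneOn ψ (Ici 0) := fun x hx x' hx' hxx' =>
  (hφmono.le_iff_le (hψ1 x hx) (hψ1 x' hx')).1 (by rwa [hψ' x hx, hψ' x' hx'])

lemma tendsto_rightInverse_atTop (hφmono : StrictMonoOn φ (Ici 1))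
    (hψ1 : ∀ x, 0 ≤ x → 1 ≤ ψ x) (hψ' : ∀ x ∈ Ici (0:ℝ), φ (ψ x) = x) :
    Tendsto ψ atTop atTop := by
  refine tendsto_atTop_atTop.2 fun b => ⟨max 0 (φ (max b 1)), fun x hx => ?_⟩
  have hx0 : 0 ≤ x := (le_max_left _ _).trans hx
  by_contra! h
  have := hφmono (hψ1 x hx0) (le_max_right b 1) (h.trans_le (le_max_left b 1))
  rw [hψ' x hx0] at this
  linarith [le_max_right 0 (φ (max b 1))]

end RightInverse

lemma tendsto_rightInverse_add_div {L φ ψ : ℝ → ℝ} (hmono : MonotoneOn L (Ici 1))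
    (htop : Tendsto L atTop atTop) (hφ : ∀ t, φ t = ∫ u in (1:ℝ)..t, L u / u)
    (hψ1 : ∀ x, 0 ≤ x → 1 ≤ ψ x) (hψmono : MonotoneOn ψ (Ici 0))
    (hψtop : Tendsto ψ atTop atTop) (hψ' : ∀ x ∈ Ici (0:ℝ), φ (ψ x) = x) {c : ℝ} (hc : 0 ≤ c) :
    Tendsto (fun x => ψ (x + c) / ψ x) atTop (𝓝 1) := by
  have hLψ : Tendsto (fun x => L (ψ x)) atTop atTop := htop.comp hψtop
  have hupper : Tendsto (fun x => exp (c / L (ψ x))) atTop (𝓝 1) := by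
    simpa [Function.comp_def] using
      (continuous_exp.tendsto 0).comp (tendsto_const_nhds.div_atTop hLψ (a := c))
  refine tendsto_of_tendsto_of_tendsto_of_le_of_le' tendsto_const_nhds hupper ?_ ?_
  · filter_upwards [eventually_ge_atTop 0] with x hx
    rw [le_div_iff₀ (one_pos.trans_le (hψ1 x hx)), one_mul]
    exact hψmono hx (by simp; linarith) (by linarith)
  · filter_upwards [eventually_ge_atTop 0, hLψ.eventually_gt_atTop 0] with x hx hLx
    have ha := hψ1 x hx
    have hab : ψ x ≤ ψ (x + c) := hψmono hx (by simp; linarith) (by linarith)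
    have hlog : L (ψ x) * (log (ψ (x + c)) - log (ψ x)) ≤ c :=
      calc L (ψ x) * (log (ψ (x + c)) - log (ψ x)) ≤ ∫ u in ψ x..ψ (x + c), L u / u :=
            (hmono.mono fun u hu => ha.trans hu.1).mul_log_sub_le_integral_div_id
              (one_pos.trans_le ha) hab
        _ = φ (ψ (x + c)) - φ (ψ x) := (sub_eq_integral_div_id hmono hφ ha hab).symm
        _ = c := by rw [hψ' x hx, hψ' (x + c) (by simp; linarith)]; ring
    calc ψ (x + c) / ψ x = exp (log (ψ (x + c)) - log (ψ x)) := by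
          rw [exp_sub, exp_log (by linarith), exp_log (by linarith)]
      _ ≤ exp (c / L (ψ x)) := exp_le_exp.2 ((le_div_iff₀ hLx).2 (by linarith))

lemma tendsto_log_const_mul_div_log {c : ℝ} (hc : 0 < c) :
    Tendsto (fun x => log (c * x) / log x) atTop (𝓝 1) := by
  have h : Tendsto (fun x => 1 + log c / log x) atTop (𝓝 1) := by
    simpa using tendsto_const_nhds.add (tendsto_const_nhds.div_atTop tendsto_log_atTop)
  refine h.congr' ?_
  filter_upwards [eventually_gt_atTop 0, tendsto_log_atTop.eventually_gt_atTop 0] with x hx hlog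
  rw [log_mul hc.ne' hx.ne', add_div, div_self hlog.ne', add_comm]
theorem stmt15_general (L : ℝ → ℝ)
    (hdiff : DifferentiableOn ℝ L (Set.Ici 1))
    (hmono : MonotoneOn L (Set.Ici 1))
    (htop : Tendsto L atTop atTop)
    (hdec : ∃ x₀ : ℝ, AntitoneOn (fun x => x * deriv L x / L x) (Set.Ici x₀))
    (φ ψ : ℝ → ℝ) (hφ : ∀ t, φ t = ∫ u in (1:ℝ)..t, L u / u)
    (hφmono : StrictMonoOn φ (Set.Ici 1))
    (hφtop : Tendsto φ atTop atTop)
    (hψ : ∀ y ∈ Set.Ici (1:ℝ), ψ (φ y) = y)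
    (hψ' : ∀ x ∈ Set.Ici (0:ℝ), φ (ψ x) = x)
    (c : ℝ) (hc : 0 < c) :
    Tendsto (fun k : ℕ => ψ (c * (k + 1)) / ψ (c * k)) atTop (nhds 1) ∧
    Tendsto
      (fun k : ℕ =>
        (Real.log (L (ψ (c * k))) + Real.log (Real.log (ψ (c * k)))) / Real.log k)
      atTop (nhds 1) := by
  have hψ1 : ∀ x, 0 ≤ x → 1 ≤ ψ x := fun x hx => one_le_of_rightInverse
    (fun _ hy => continuousOn_Icc_of_integral_div_id hmono hφ hy) (by simp [hφ]) hφtop hψ hx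
  have hψtop := tendsto_rightInverse_atTop hφmono hψ1 hψ'
  have hck : Tendsto (fun k : ℕ => c * k) atTop atTop :=
    tendsto_natCast_atTop_atTop.const_mul_atTop hc
  refine ⟨?_, ?_⟩
  · simpa [mul_add, Function.comp_def] using (tendsto_rightInverse_add_div hmono htop hφ hψ1
      (monotoneOn_rightInverse hφmono hψ1 hψ') hψtop hψ' hc.le).comp hck
  · have h := ((tendsto_log_add_log_log_div_log hdiff hmono htop hdec hφ hφtop).comp
      (hψtop.comp hck)).mul ((tendsto_log_const_mul_div_log hc).comp tendsto_natCast_atTop_atTop)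
    rw [mul_one] at h
    refine h.congr' ?_
    filter_upwards [(tendsto_log_atTop.comp hck).eventually_gt_atTop 0] with k hk
    simp only [Function.comp_apply, hψ' (c * k) (by simp; positivity)]
    exact div_mul_div_cancel₀ hk.ne'

theorem stmt15 (L : ℝ → ℝ)
    (hdiff : DifferentiableOn ℝ L (Set.Ici 1))
    (hmono : MonotoneOn L (Set.Ici 1))
    (htop : Tendsto L atTop atTop)
    (hsv : SlowlyVarying L)
    (hdec : ∃ x₀ : ℝ, AntitoneOn (fun x => x * deriv L x / L x) (Set.Ici x₀))
    (φ ψ : ℝ → ℝ) (hφ : ∀ t, φ t = ∫ u in (1:ℝ)..t, L u / u)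
    (hφmono : StrictMonoOn φ (Set.Ici 1))
    (hφtop : Tendsto φ atTop atTop)
    (hψ : ∀ y ∈ Set.Ici (1:ℝ), ψ (φ y) = y)
    (hψ' : ∀ x ∈ Set.Ici (0:ℝ), φ (ψ x) = x)
    (c : ℝ) (hc : 0 < c) :
    Tendsto (fun k : ℕ => ψ (c * (k + 1)) / ψ (c * k)) atTop (nhds 1) ∧
    Tendsto
      (fun k : ℕ =>
        (Real.log (L (ψ (c * k))) + Real.log (Real.log (ψ (c * k)))) / Real.log k)
      atTop (nhds 1) :=
  stmt15_general L hdiff hmono htop hdec φ ψ hφ hφmono hφtop hψ hψ' c hc
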